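/- Let a > 0, C₀ ≥ 0 and b ∈ ℝ. There exists ε₀ > 0 (depending only on a and C₀) such that: for every pair of continuously differentiable functions ρ : [0, ∞) → ℝ and γ : [0, ∞) → ℝ with ρ(t) > 0 for all t ≥ 0, ρ(0) ≤ ε₀, |ρ'(t) + a·ρ(t)³| ≤ C₀·ρ(t)⁴ for all t ≥ 0, and |γ'(t) − b·ρ(t)²| ≤ C₀·ρ(t)³ for all t ≥ 0, there exist constants C* ∈ ℝ and C₁ > 0 such that |γ(t) − (b/(2a))·log t − C*| ≤ C₁/√t for all t ≥ 1. -/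

import Mathlib

open Real Set Filter Topology

/-!
With `u = ρ⁻²` the equation for `ρ` reads `|u' - 2a| ≤ 2C₀ρ`. A barrier argument keeps `ρ ≤ ε₀`,
so `u' ≥ a`, `u t > a t` and `ρ t < (a t)^(-1/2)`; feeding this back gives
`u t = 2 a t + O(√t)`, hence `γ' t = b / (2 a t) + O(t^(-3/2))`. The error is integrable, so
`γ t - (b / 2a) log t` converges, and its distance to the limit is bounded by the tail
`∫ₜ^∞ s^(-3/2) ds = 2 / √t`.
-/

theorem abs_sub_le_sub_of_abs_deriv_le {c : ℝ} {f f' B B' : ℝ → ℝ}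
    (hf : ∀ t ∈ Ici c, HasDerivWithinAt f (f' t) (Ici c) t)
    (hB : ∀ t ∈ Ici c, HasDerivWithinAt B (B' t) (Ici c) t)
    (hbound : ∀ t ∈ Ici c, |f' t| ≤ B' t) ⦃s t : ℝ⦄ (hs : c ≤ s) (hst : s ≤ t) :
    |f t - f s| ≤ B t - B s := by
  have hsub : ∀ x ∈ Icc s t, Ici x ⊆ Ici c := fun x hx => Ici_subset_Ici.2 (hs.trans hx.1)
  have hcont : ∀ g g' : ℝ → ℝ, (∀ t ∈ Ici c, HasDerivWithinAt g (g' t) (Ici c) t) →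
      ContinuousOn (fun x => g x - g s) (Icc s t) := fun g g' hg x hx =>
    ((hg x (hs.trans hx.1)).continuousWithinAt.mono
      (Icc_subset_Ici_self.trans (Ici_subset_Ici.2 hs))).sub continuousWithinAt_const
  refine image_norm_le_of_norm_deriv_right_le_deriv_boundary' (f := fun x => f x - f s)
    (B := fun x => B x - B s) (hcont f f' hf)
    (fun x hx => ((hf x (hs.trans hx.1)).mono (hsub x (Ico_subset_Icc_self hx))).sub_const _)
    (by simp) (hcont B B' hB)
    (fun x hx => ((hB x (hs.trans hx.1)).mono (hsub x (Ico_subset_Icc_self hx))).sub_const _)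
    (fun x hx => hbound x (hs.trans hx.1)) ⟨hst, le_rfl⟩

theorem exists_abs_sub_le_of_abs_deriv_le {c : ℝ} {f f' B B' : ℝ → ℝ}
    (hf : ∀ t ∈ Ici c, HasDerivWithinAt f (f' t) (Ici c) t)
    (hB : ∀ t ∈ Ici c, HasDerivWithinAt B (B' t) (Ici c) t)
    (hbound : ∀ t ∈ Ici c, |f' t| ≤ B' t) (hB₀ : Tendsto B atTop (𝓝 0)) :
    ∃ L, ∀ t, c ≤ t → |f t - L| ≤ -B t := by
  have hcomp := abs_sub_le_sub_of_abs_deriv_le hf hB hbound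
  have hcauchy : CauchySeq f := by
    refine Metric.cauchySeq_iff'.2 fun ε hε => ?_
    obtain ⟨N, hN⟩ := (Metric.tendsto_atTop.1 hB₀) (ε / 2) (half_pos hε)
    refine ⟨max N c, fun n hn => ?_⟩
    have h1 := hN n ((le_max_left _ _).trans hn)
    have h2 := hN (max N c) (le_max_left _ _)
    rw [Real.dist_0_eq_abs] at h1 h2
    rw [Real.dist_eq]
    calc |f n - f (max N c)| ≤ B n - B (max N c) := hcomp (le_max_right _ _) hn
      _ < ε := by linarith [abs_lt.1 h1, abs_lt.1 h2]
  obtain ⟨L, hL⟩ := cauchySeq_tendsto_of_complete hcauchy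
  refine ⟨L, fun t ht => ?_⟩
  rw [abs_sub_comm, ← zero_sub]
  refine le_of_tendsto_of_tendsto (hL.sub_const _).abs (hB₀.sub_const _) ?_
  filter_upwards [eventually_ge_atTop t] with s hs using hcomp ht hs

theorem abs_sub_sub_mul_le_of_abs_deriv_sub_le {c m δ : ℝ} {f f' : ℝ → ℝ}
    (hf : ∀ t ∈ Ici c, HasDerivWithinAt f (f' t) (Ici c) t)
    (hbound : ∀ t ∈ Ici c, |f' t - m| ≤ δ) ⦃t : ℝ⦄ (ht : c ≤ t) :
    |f t - f c - m * (t - c)| ≤ δ * (t - c) := by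
  have h := abs_sub_le_sub_of_abs_deriv_le (f := fun x => f x - m * x) (B := fun x => δ * x)
    (fun x hx => (hf x hx).sub ((hasDerivAt_id x).const_mul m).hasDerivWithinAt)
    (fun x _ => ((hasDerivAt_id x).const_mul δ).hasDerivWithinAt) (by simpa using hbound)
    le_rfl ht
  convert h using 2 <;> ring

theorem abs_sub_mul_le_of_abs_deriv_sub_le_div_sqrt {m K : ℝ} {f f' : ℝ → ℝ}
    (hf : ∀ t ∈ Ici 1, HasDerivWithinAt f (f' t) (Ici 1) t)
    (hbound : ∀ t ∈ Ici 1, |f' t - m| ≤ K / √t) ⦃t : ℝ⦄ (ht : 1 ≤ t) :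
    |f t - m * t| ≤ (|f 1 - m| + 2 * K) * √t := by
  have hK : 0 ≤ K := by simpa using (abs_nonneg _).trans (hbound 1 self_mem_Ici)
  have hsqrt : ∀ x ∈ Ici (1 : ℝ), HasDerivWithinAt (fun x => 2 * K * √x) (K / √x) (Ici 1) x :=
    fun x hx => ((hasDerivAt_sqrt (zero_lt_one.trans_le hx).ne').const_mul (2 * K)
      |>.hasDerivWithinAt).congr_deriv (by field_simp)
  have h := abs_sub_le_sub_of_abs_deriv_le (f := fun x => f x - m * x)
    (fun x hx => (hf x hx).sub ((hasDerivAt_id x).const_mul m).hasDerivWithinAt) hsqrt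
    (by simpa using hbound) le_rfl ht
  have h1 : 1 ≤ √t := one_le_sqrt.2 ht
  simp only [sqrt_one, mul_one] at h
  nlinarith [abs_sub_abs_le_abs_sub (f t - m * t) (f 1 - m), abs_nonneg (f 1 - m)]

theorem hasDerivAt_neg_two_mul_div_sqrt (K : ℝ) {x : ℝ} (hx : 0 < x) :
    HasDerivAt (fun x => -(2 * K) / √x) (K / (x * √x)) x := by
  have hsx := sqrt_pos.2 hx
  refine ((hasDerivAt_sqrt hx.ne').fun_inv hsx.ne' |>.const_mul (-(2 * K))).congr_deriv ?_
    |>.congr_of_eventuallyEq (Eventually.of_forall fun y => div_eq_mul_inv _ _)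
  rw [sq_sqrt hx.le]
  field_simp

theorem tendsto_neg_two_mul_div_sqrt (K : ℝ) : Tendsto (fun x => -(2 * K) / √x) atTop (𝓝 0) :=
  tendsto_const_nhds.div_atTop tendsto_sqrt_atTop

theorem le_of_abs_deriv_add_mul_pow_three_le {a C ε c : ℝ} {ρ ρ' : ℝ → ℝ}
    (hρ : ∀ t ∈ Ici c, HasDerivWithinAt ρ (ρ' t) (Ici c) t) (hpos : ∀ t ∈ Ici c, 0 < ρ t)
    (hode : ∀ t ∈ Ici c, |ρ' t + a * ρ t ^ 3| ≤ C * ρ t ^ 4) (hε : C * ε < a) (hc : ρ c ≤ ε) :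
    ∀ t ∈ Ici c, ρ t ≤ ε := fun t ht =>
  image_le_of_deriv_right_lt_deriv_boundary (B := fun _ => ε)
    (fun x hx => (hρ x hx.1).continuousWithinAt.mono Icc_subset_Ici_self)
    (fun x hx => (hρ x hx.1).mono (Ici_subset_Ici.2 hx.1)) hc (fun x => hasDerivAt_const x ε)
    (fun x hx hxε => by
      have hρx := hpos x hx.1
      have := (abs_le.1 (hode x hx.1)).2
      subst hxε
      nlinarith [mul_pos (pow_pos hρx 3) (sub_pos.2 hε)])
    ⟨ht, le_rfl⟩

theorem HasDerivWithinAt.inv_sq {f : ℝ → ℝ} {f' t : ℝ} {s : Set ℝ}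
    (hf : HasDerivWithinAt f f' s t) (ht : f t ≠ 0) :
    HasDerivWithinAt (fun x => (f x ^ 2)⁻¹) (-2 * f' / f t ^ 3) s t := by
  refine ((hf.fun_pow 2).fun_inv (pow_ne_zero 2 ht)).congr_deriv ?_
  field_simp
  ring

theorem abs_neg_two_mul_div_pow_three_sub_le {a C r r' : ℝ} (hr : 0 < r)
    (h : |r' + a * r ^ 3| ≤ C * r ^ 4) : |-2 * r' / r ^ 3 - 2 * a| ≤ 2 * C * r := by
  have hr3 := pow_pos hr 3
  rw [show -2 * r' / r ^ 3 - 2 * a = -2 * ((r' + a * r ^ 3) / r ^ 3) by field_simp; ring,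
    abs_mul, abs_div, abs_of_pos hr3, abs_neg, abs_two, mul_div_assoc', div_le_iff₀ hr3]
  linarith

theorem lt_inv_sqrt_of_lt_inv_sq {x r : ℝ} (hx : 0 < x) (hr : 0 < r) (h : x < (r ^ 2)⁻¹) :
    r < (√x)⁻¹ := by
  rw [lt_inv_comm₀ hx (pow_pos hr 2)] at h
  simpa [sqrt_inv, sqrt_sq hr.le] using sqrt_lt_sqrt (pow_pos hr 2).le h

theorem pow_three_le_of_mul_lt_inv_sq {a t r : ℝ} (ha : 0 < a) (ht : 0 < t) (hr : 0 < r)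
    (h : a * t < (r ^ 2)⁻¹) : r ^ 3 ≤ 1 / (a * √a) / (t * √t) := by
  have hat := mul_pos ha ht
  calc r ^ 3 ≤ ((√(a * t))⁻¹) ^ 3 := by
        gcongr; exact (lt_inv_sqrt_of_lt_inv_sq hat hr h).le
    _ = 1 / (a * √a) / (t * √t) := by
      rw [sqrt_mul ha.le]
      have hsa := sq_sqrt ha.le
      have hst := sq_sqrt ht.le
      field_simp
      rw [hsa, hst]

theorem abs_sq_sub_inv_le {a t r M : ℝ} (ha : 0 < a) (ht : 0 < t) (hr : 0 < r)
    (hlow : a * t < (r ^ 2)⁻¹) (hup : |(r ^ 2)⁻¹ - 2 * a * t| ≤ M * √t) :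
    |r ^ 2 - (2 * a * t)⁻¹| ≤ M / (2 * a ^ 2) / (t * √t) := by
  calc |r ^ 2 - (2 * a * t)⁻¹| = |(r ^ 2)⁻¹ - 2 * a * t| / ((r ^ 2)⁻¹ * (2 * a * t)) := by
        rw [abs_sub_comm (r ^ 2)⁻¹, ← abs_of_pos (by positivity : 0 < (r ^ 2)⁻¹ * (2 * a * t)),
          ← abs_div]
        congr 1
        field_simp
    _ ≤ M * √t / ((a * t) * (2 * a * t)) := by
        gcongr
        exact (abs_nonneg _).trans hup
    _ = M / (2 * a ^ 2) / (t * √t) := by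
        have := sq_sqrt ht.le
        field_simp
        rw [this]

theorem abs_sub_div_two_mul_mul_inv_le {a b C M t g r : ℝ} (ha : 0 < a) (hC : 0 ≤ C) (ht : 0 < t)
    (hr : 0 < r) (hg : |g - b * r ^ 2| ≤ C * r ^ 3) (hlow : a * t < (r ^ 2)⁻¹)
    (hup : |(r ^ 2)⁻¹ - 2 * a * t| ≤ M * √t) :
    |g - b / (2 * a) * t⁻¹| ≤ (|b| * M / (2 * a ^ 2) + C / (a * √a)) / (t * √t) := by
  have hcube := pow_three_le_of_mul_lt_inv_sq ha ht hr hlow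
  have hsq := abs_sq_sub_inv_le ha ht hr hlow hup
  calc |g - b / (2 * a) * t⁻¹| = |(g - b * r ^ 2) + b * (r ^ 2 - (2 * a * t)⁻¹)| := by
        congr 1; field_simp; ring
    _ ≤ C * r ^ 3 + |b| * (M / (2 * a ^ 2) / (t * √t)) := by
        grw [abs_add_le, abs_mul, hg, hsq]
    _ ≤ C * (1 / (a * √a) / (t * √t)) + |b| * (M / (2 * a ^ 2) / (t * √t)) := by gcongr
    _ = _ := by ring

theorem mul_lt_inv_sq_of_abs_deriv_add_mul_pow_three_le {a C : ℝ} {ρ ρ' : ℝ → ℝ}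
    (hρ : ∀ t ∈ Ici 0, HasDerivWithinAt ρ (ρ' t) (Ici 0) t) (hpos : ∀ t ∈ Ici 0, 0 < ρ t)
    (hode : ∀ t ∈ Ici 0, |ρ' t + a * ρ t ^ 3| ≤ C * ρ t ^ 4)
    (hsmall : ∀ t ∈ Ici 0, 2 * C * ρ t ≤ a) : ∀ t ∈ Ici 0, a * t < (ρ t ^ 2)⁻¹ := by
  intro t ht
  have h := abs_sub_sub_mul_le_of_abs_deriv_sub_le (m := 2 * a)
    (fun x hx => (hρ x hx).inv_sq (hpos x hx).ne')
    (fun x hx => (abs_neg_two_mul_div_pow_three_sub_le (hpos x hx) (hode x hx)).trans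
      (hsmall x hx)) ht
  have h0 : 0 < (ρ 0 ^ 2)⁻¹ := by have := hpos 0 self_mem_Ici; positivity
  simp only [sub_zero] at h
  linarith [(abs_le.1 h).1]

theorem exists_abs_inv_sq_sub_le {a C : ℝ} {ρ ρ' : ℝ → ℝ} (ha : 0 < a) (hC : 0 ≤ C)
    (hρ : ∀ t ∈ Ici 0, HasDerivWithinAt ρ (ρ' t) (Ici 0) t) (hpos : ∀ t ∈ Ici 0, 0 < ρ t)
    (hode : ∀ t ∈ Ici 0, |ρ' t + a * ρ t ^ 3| ≤ C * ρ t ^ 4)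
    (hlow : ∀ t ∈ Ici 0, a * t < (ρ t ^ 2)⁻¹) :
    ∃ M, ∀ t ∈ Ici 1, |(ρ t ^ 2)⁻¹ - 2 * a * t| ≤ M * √t := by
  have hIci : Ici (1 : ℝ) ⊆ Ici 0 := Ici_subset_Ici.2 zero_le_one
  refine ⟨_, abs_sub_mul_le_of_abs_deriv_sub_le_div_sqrt (K := 2 * C / √a)
    (fun x hx => ((hρ x (hIci hx)).inv_sq (hpos x (hIci hx)).ne').mono hIci) fun x hx => ?_⟩
  have hx : 0 < x := zero_lt_one.trans_le hx
  calc _ ≤ 2 * C * ρ x := abs_neg_two_mul_div_pow_three_sub_le (hpos x hx.le) (hode x hx.le)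
    _ ≤ 2 * C * (√(a * x))⁻¹ := by
      gcongr
      exact (lt_inv_sqrt_of_lt_inv_sq (by positivity) (hpos x hx.le) (hlow x hx.le)).le
    _ = 2 * C / √a / √x := by rw [sqrt_mul ha.le]; field_simp

/-- Phase asymptotics: if ρ > 0 is C¹ on [0,∞) with ρ(0) small,
    |ρ' + a·ρ³| ≤ C₀·ρ⁴ and |γ' − b·ρ²| ≤ C₀·ρ³, then
    γ(t) = (b/(2a))·log t + C* + O(1/√t) as t → ∞. -/
theorem stmt_17 (a C₀ b : ℝ) (ha : 0 < a) (hC₀ : 0 ≤ C₀) :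
    ∃ ε₀ : ℝ, 0 < ε₀ ∧
      ∀ ρ ρ' γ γ' : ℝ → ℝ,
        ContinuousOn ρ' (Set.Ici (0:ℝ)) →
        (∀ t ∈ Set.Ici (0:ℝ), HasDerivWithinAt ρ (ρ' t) (Set.Ici (0:ℝ)) t) →
        ContinuousOn γ' (Set.Ici (0:ℝ)) →
        (∀ t ∈ Set.Ici (0:ℝ), HasDerivWithinAt γ (γ' t) (Set.Ici (0:ℝ)) t) →
        (∀ t : ℝ, 0 ≤ t → 0 < ρ t) →
        ρ 0 ≤ ε₀ →
        (∀ t : ℝ, 0 ≤ t → |ρ' t + a * ρ t ^ 3| ≤ C₀ * ρ t ^ 4) →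
        (∀ t : ℝ, 0 ≤ t → |γ' t - b * ρ t ^ 2| ≤ C₀ * ρ t ^ 3) →
        ∃ Cstar C₁ : ℝ, 0 < C₁ ∧
          ∀ t : ℝ, 1 ≤ t →
            |γ t - b / (2 * a) * Real.log t - Cstar| ≤ C₁ / Real.sqrt t := by
  set ε₀ := a / (2 * C₀ + 1)
  refine ⟨ε₀, by positivity, ?_⟩
  intro ρ ρ' γ γ' _ hρ _ hγ hpos hρ0 hρode hγode
  have hε : 2 * C₀ * ε₀ < a := by
    rw [mul_div_assoc', div_lt_iff₀ (by positivity)]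
    nlinarith
  have hρε := le_of_abs_deriv_add_mul_pow_three_le hρ hpos hρode
    (by nlinarith [mul_nonneg hC₀ (by positivity : 0 ≤ ε₀)]) hρ0
  have hsmall : ∀ t ∈ Ici (0 : ℝ), 2 * C₀ * ρ t ≤ a := fun t ht =>
    (mul_le_mul_of_nonneg_left (hρε t ht) (by positivity)).trans hε.le
  have hlow := mul_lt_inv_sq_of_abs_deriv_add_mul_pow_three_le hρ hpos hρode hsmall
  obtain ⟨M, hup⟩ := exists_abs_inv_sq_sub_le ha hC₀ hρ hpos hρode hlow
  set K := |b| * M / (2 * a ^ 2) + C₀ / (a * √a)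
  have hphase : ∀ t ∈ Ici (1 : ℝ), |γ' t - b / (2 * a) * t⁻¹| ≤ K / (t * √t) := fun t ht =>
    have ht0 : 0 < t := zero_lt_one.trans_le ht
    abs_sub_div_two_mul_mul_inv_le ha hC₀ ht0 (hpos t ht0.le) (hγode t ht0.le) (hlow t ht0.le)
      (hup t ht)
  have hK : 0 ≤ K := by simpa using (abs_nonneg _).trans (hphase 1 self_mem_Ici)
  have hIci : Ici (1 : ℝ) ⊆ Ici 0 := Ici_subset_Ici.2 zero_le_one
  obtain ⟨L, hL⟩ := exists_abs_sub_le_of_abs_deriv_le (f := fun t => γ t - b / (2 * a) * log t)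
    (fun t ht => ((hγ t (hIci ht)).mono hIci).sub
      (((hasDerivAt_log (zero_lt_one.trans_le ht).ne').const_mul _).hasDerivWithinAt))
    (fun t ht => (hasDerivAt_neg_two_mul_div_sqrt K (zero_lt_one.trans_le ht)).hasDerivWithinAt)
    hphase (tendsto_neg_two_mul_div_sqrt K)
  refine ⟨L, 2 * K + 1, by positivity, fun t ht => (hL t ht).trans ?_⟩
  rw [neg_div, neg_neg]
  gcongr
  linarith
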